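/- In the vertex cover reduction with δ^p = Z·α^p and β^p > δ^p: if z ∈ {0,1}^n satisfies ‖W z + b‖_p^p ≤ δ^p, then D = {i : z_i = 0} is a vertex cover of G of size exactly q. -/

import Mathlib

/-! On 0/1 inputs every edge coordinate of `W z + b` is `±α` unless both endpoints are `1`, in
which case it is `3α`. The `Z` edge coordinates alone therefore contribute at least `Z αᵖ`, and
strictly more as soon as some edge has both endpoints outside `D`; so the bound `Z αᵖ` forces
`D` to be a vertex cover and the last coordinate `β (∑ zᵢ - (n - q))` to vanish, i.e.
`#D = n - ∑ zᵢ = q`. -/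

/-- The output `W z + b` of the vertex-cover reduction network (see the paper). -/
def vertexCoverOut (n : ℕ) (G : SimpleGraph (Fin n)) [DecidableRel G.Adj]
    (α β : ℝ) (q : ℕ) (z : Fin n → ℝ) :
    ({e : Fin n × Fin n // e.1 < e.2} ⊕ Unit) → ℝ :=
  Sum.elim
    (fun e => if G.Adj e.val.1 e.val.2
      then 2 * α * (z e.val.1 + z e.val.2) - α else 0)
    (fun _ => β * (∑ i, z i) - ((n - q : ℕ) : ℝ) * β)

open Finset

def orderedEdges {V : Type*} [LinearOrder V] [Fintype V] (G : SimpleGraph V)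
    [DecidableRel G.Adj] : Finset {e : V × V // e.1 < e.2} :=
  univ.filter fun e => G.Adj e.val.1 e.val.2

section OrderedEdges

variable {V : Type*} [LinearOrder V] [Fintype V] (G : SimpleGraph V) [DecidableRel G.Adj]

theorem exists_mem_orderedEdges_of_adj {P : V → Prop} {i j : V} (hij : G.Adj i j)
    (hi : P i) (hj : P j) : ∃ e ∈ orderedEdges G, P e.val.1 ∧ P e.val.2 := by
  rcases lt_or_gt_of_ne (G.ne_of_adj hij) with hlt | hlt
  · exact ⟨⟨(i, j), hlt⟩, by simpa [orderedEdges] using hij, hi, hj⟩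
  · exact ⟨⟨(j, i), hlt⟩, by simpa [orderedEdges] using hij.symm, hj, hi⟩

variable {G} {p : ℕ} {α : ℝ} {z : V → ℝ}

theorem le_abs_two_mul_add_sub {a b : ℝ} (hα : 0 ≤ α) (ha : a = 0 ∨ a = 1)
    (hb : b = 0 ∨ b = 1) : α ≤ |2 * α * (a + b) - α| := by
  rcases ha with rfl | rfl <;> rcases hb with rfl | rfl <;> norm_num <;>
    rw [abs_of_nonneg (by linarith)] <;> linarith

theorem card_mul_pow_le_sum_orderedEdges (hα : 0 ≤ α) (hz : ∀ i, z i = 0 ∨ z i = 1) :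
    #(orderedEdges G) * α ^ p ≤
      ∑ e ∈ orderedEdges G, |2 * α * (z e.val.1 + z e.val.2) - α| ^ p := by
  rw [← nsmul_eq_mul, ← sum_const]
  exact sum_le_sum fun e _ =>
    pow_le_pow_left₀ hα (le_abs_two_mul_add_sub hα (hz _) (hz _)) p

theorem card_mul_pow_lt_sum_orderedEdges_of_adj (hα : 0 < α) (hp : p ≠ 0)
    (hz : ∀ i, z i = 0 ∨ z i = 1) {i j : V} (hij : G.Adj i j) (hi : z i = 1) (hj : z j = 1) :
    #(orderedEdges G) * α ^ p <
      ∑ e ∈ orderedEdges G, |2 * α * (z e.val.1 + z e.val.2) - α| ^ p := by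
  obtain ⟨e, he, he₁, he₂⟩ := exists_mem_orderedEdges_of_adj G (P := (z · = 1)) hij hi hj
  rw [← nsmul_eq_mul, ← sum_const]
  refine sum_lt_sum (fun e _ =>
    pow_le_pow_left₀ hα.le (le_abs_two_mul_add_sub hα.le (hz _) (hz _)) p) ⟨e, he, ?_⟩
  have h3α : |2 * α * (z e.val.1 + z e.val.2) - α| = 3 * α := by
    rw [he₁, he₂, abs_of_nonneg (by linarith)]
    ring
  rw [h3α]
  exact pow_lt_pow_left₀ (by linarith) hα.le hp

end OrderedEdges

theorem sum_add_card_filter_eq_zero {ι : Type*} [Fintype ι] {z : ι → ℝ}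
    (hz : ∀ i, z i = 0 ∨ z i = 1) :
    ∑ i, z i + #(univ.filter (z · = 0)) = Fintype.card ι := by
  have hsum : ∑ i, z i = #(univ.filter fun i => ¬ z i = 0) := by
    rw [natCast_card_filter]
    refine sum_congr rfl fun i _ => ?_
    rcases hz i with hi | hi <;> simp [hi]
  rw [hsum, ← Nat.cast_add, add_comm, card_filter_add_card_filter_not, card_univ]

theorem sum_pow_abs_vertexCoverOut (n : ℕ) (G : SimpleGraph (Fin n)) [DecidableRel G.Adj]
    (α β : ℝ) (q : ℕ) (z : Fin n → ℝ) {p : ℕ} (hp : p ≠ 0) :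
    ∑ r, |vertexCoverOut n G α β q z r| ^ p =
      ∑ e ∈ orderedEdges G, |2 * α * (z e.val.1 + z e.val.2) - α| ^ p +
        |β * ∑ i, z i - ((n - q : ℕ) : ℝ) * β| ^ p := by
  rw [Fintype.sum_sum_type, orderedEdges, sum_filter]
  congr 1
  · refine sum_congr rfl fun e _ => ?_
    split_ifs with he <;> simp [vertexCoverOut, he, hp]
  · simp [vertexCoverOut]

theorem stmt_15_general (n q : ℕ) (hq : q ≤ n) (G : SimpleGraph (Fin n)) [DecidableRel G.Adj]
    (p : ℕ) (hp0 : 0 < p) (α β : ℝ) (hα : 0 < α) (Z : ℕ)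
    (hZ : Z = (Finset.univ.filter
      (fun e : {e : Fin n × Fin n // e.1 < e.2} => G.Adj e.val.1 e.val.2)).card)
    (hβ : β ^ p > (Z : ℝ) * α ^ p)
    (z : Fin n → ℝ) (hz : ∀ i, z i = 0 ∨ z i = 1)
    (h : (∑ r, |vertexCoverOut n G α β q z r| ^ p) ≤ (Z : ℝ) * α ^ p) :
    let D : Finset (Fin n) := Finset.univ.filter (fun i => z i = 0)
    D.card = q ∧ ∀ i j, G.Adj i j → i ∈ D ∨ j ∈ D := by
  intro D
  change Z = #(orderedEdges G) at hZ
  subst hZ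
  rw [sum_pow_abs_vertexCoverOut n G α β q z hp0.ne'] at h
  have hlast_nonneg := pow_nonneg (abs_nonneg (β * ∑ i, z i - ((n - q : ℕ) : ℝ) * β)) p
  have hedges := card_mul_pow_le_sum_orderedEdges (G := G) (p := p) hα.le hz
  constructor
  · have hlast : β * ∑ i, z i - ((n - q : ℕ) : ℝ) * β = 0 :=
      abs_eq_zero.mp (pow_eq_zero_iff hp0.ne' |>.mp (by linarith))
    have hβ0 : β ≠ 0 := by
      rintro rfl
      rw [zero_pow hp0.ne'] at hβ
      exact hβ.not_ge (by positivity)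
    have hsum : ∑ i, z i = ((n - q : ℕ) : ℝ) := by
      have hfactor : β * (∑ i, z i - ((n - q : ℕ) : ℝ)) = 0 := by rw [← hlast]; ring
      exact sub_eq_zero.mp ((mul_eq_zero.mp hfactor).resolve_left hβ0)
    have hcard := sum_add_card_filter_eq_zero hz
    rw [hsum, Fintype.card_fin, Nat.cast_sub hq] at hcard
    exact_mod_cast (show (#D : ℝ) = q by linarith)
  · intro i j hij
    by_contra hcover
    simp only [D, mem_filter, mem_univ, true_and, not_or] at hcover
    have hgt := card_mul_pow_lt_sum_orderedEdges_of_adj hα hp0.ne' hz hij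
      ((hz i).resolve_left hcover.1) ((hz j).resolve_left hcover.2)
    linarith

theorem stmt_15 (n q : ℕ) (hq : q ≤ n) (G : SimpleGraph (Fin n)) [DecidableRel G.Adj]
    (p : ℕ) (hp : Even p) (hp0 : 0 < p) (α β : ℝ) (hα : 0 < α) (Z : ℕ)
    (hZ : Z = (Finset.univ.filter
      (fun e : {e : Fin n × Fin n // e.1 < e.2} => G.Adj e.val.1 e.val.2)).card)
    (hZ1 : 1 ≤ Z)
    (hβ : β ^ p > (Z : ℝ) * α ^ p)
    (z : Fin n → ℝ) (hz : ∀ i, z i = 0 ∨ z i = 1)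
    (h : (∑ r, |vertexCoverOut n G α β q z r| ^ p) ≤ (Z : ℝ) * α ^ p) :
    let D : Finset (Fin n) := Finset.univ.filter (fun i => z i = 0)
    D.card = q ∧ ∀ i j, G.Adj i j → i ∈ D ∨ j ∈ D :=
  stmt_15_general n q hq G p hp0 α β hα Z hZ hβ z hz h
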